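/- Fix sets X, Y and a partial function a : Y ⇀ X, and let f : X ⇀ Y. Then f is an idempotent of the sandwich semigroup PT_XY^a, i.e., f⬝a⬝f = f, if and only if for every y ∈ ran(f) we have y ∈ dom(a), a(y) ∈ dom(f), and f(a(y)) = y (i.e., the restriction of a⬝f to ran(f) is the identity on ran(f)). -/

import Mathlib

/-! The paper's `f⬝a⬝f` is `(f.comp a).comp f`, so idempotency says that the partial map
`y ↦ f (a y)` fixes every value of `f`. -/

namespace PFun

variable {α β γ : Type*}

theorem mem_comp_iff (f : β →. γ) (g : α →. β) (x : α) (z : γ) :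
    z ∈ f.comp g x ↔ ∃ y ∈ g x, z ∈ f y :=
  Part.mem_bind_iff

theorem comp_eq_self_iff (e : β →. β) (f : α →. β) :
    e.comp f = f ↔ ∀ y ∈ f.ran, y ∈ e y := by
  constructor
  · rintro h y ⟨x, hy⟩
    obtain ⟨y', hy', hyy'⟩ := (mem_comp_iff e f x y).mp (h.symm ▸ hy)
    rwa [Part.mem_unique hy' hy] at hyy'
  · intro h
    refine ext fun x y => ⟨fun hy => ?_, fun hy => ?_⟩
    · obtain ⟨y', hy', hyy'⟩ := (mem_comp_iff e f x y).mp hy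
      rwa [Part.mem_unique hyy' (h y' ⟨x, hy'⟩)]
    · exact (mem_comp_iff e f x y).mpr ⟨y, hy, h y ⟨x, hy⟩⟩

end PFun

/-- Fix `a : Y ⇀ X` and `f : X ⇀ Y`.  Then `f` is an idempotent of the
sandwich semigroup `PT_XY^a`, i.e. `f⬝a⬝f = f`, iff for every `y ∈ ran f` there is `x` with
`x ∈ a y` and `y ∈ f x` (i.e. `y ∈ dom a`, `a(y) ∈ dom f` and `f(a(y)) = y`). -/
theorem idempotent_iff_PT {X Y : Type*} (a : Y →. X) (f : X →. Y) :
    f.comp (a.comp f) = f ↔ ∀ y ∈ f.ran, ∃ x : X, x ∈ a y ∧ y ∈ f x := by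
  simp only [← PFun.comp_assoc, PFun.comp_eq_self_iff, PFun.mem_comp_iff]
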